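/- arXiv:1510.03420 — 4 statements merged into one kernel-verified Lean document; each statement's English description precedes it below -/
import Mathlib

section
/- Let λ : ℕ → ℂ be a sequence with ∑_n ‖λ_n‖ < ∞ such that λ_n ≠ 0 for every n. Then every λ_n is a positive real number if and only if there exists a real number c with ‖λ_n‖ ≤ c for all n such that for all integers j, k ≥ 0 the number ∑_{i=0}^{j} (−1)^i binom(j,i) p_{k+1+i}/c^{k+1+i} is a nonnegative real number (i.e. it has zero imaginary part and nonnegative real part). -/
/-!
Put `μ n = λ n / c`. By the binomial theorem the numbers in the criterion are
`∑' n, μ n ^ (k + 1) * (1 - μ n) ^ j`, which are nonnegative when every `μ n` lies in `(0, 1]`.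

Conversely, suppose some `μ n` is not a positive real. Then `‖μ n‖ + ‖1 - μ n‖ > 1`, and since this
quantity tends to `1` it attains its maximum at some `z = μ N`, again not a positive real. With
`a = ‖z‖` and `b = ‖1 - z‖`, the level curve of `x ^ a * y ^ b` through `(a, b)` is tangent to the
line `x + y = a + b`, so `‖μ n‖ ^ a * ‖1 - μ n‖ ^ b` is strictly maximal exactly at the `n` with
`μ n ∈ {z, conj z}`; this survives replacing `a : b` by a nearby ratio `K : J` of positive integers.
Along exponents `m` for which the phase of `(z ^ K * (1 - z) ^ J) ^ m` returns to `1`, the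
normalised sums for `j = m J`, `k = m K + δ` then converge to a positive multiple of `Re (z ^ δ)`.
Hence `Re (z ^ δ) ≥ 0` for every `δ`, which fails for a `z` off the positive real axis.
-/

open Complex Finset Filter Topology
open scoped ComplexOrder ComplexConjugate

lemma Real.mul_log_div_le {a x : ℝ} (ha : 0 < a) (hx : 0 < x) :
    a * Real.log (x / a) ≤ x - a := by
  calc a * Real.log (x / a) ≤ a * (x / a - 1) := by
        gcongr
        exact Real.log_le_sub_one_of_pos (div_pos hx ha)
    _ = x - a := by field_simp

lemma Real.mul_log_div_lt {a x : ℝ} (ha : 0 < a) (hx : 0 < x) (hxa : x ≠ a) :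
    a * Real.log (x / a) < x - a := by
  calc a * Real.log (x / a) < a * (x / a - 1) := by
        gcongr
        exact Real.log_lt_sub_one_of_pos (div_pos hx ha) (by simpa [div_eq_one_iff_eq ha.ne'])
    _ = x - a := by field_simp

lemma Real.mul_log_div_add_mul_log_div_neg {a b x y : ℝ} (ha : 0 < a) (hb : 0 < b) (hx : 0 < x)
    (hy : 0 < y) (hxy : x + y ≤ a + b) (hne : x ≠ a ∨ y ≠ b) :
    a * Real.log (x / a) + b * Real.log (y / b) < 0 := by
  rcases hne with hxa | hyb
  · linarith [Real.mul_log_div_lt ha hx hxa, Real.mul_log_div_le hb hy]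
  · linarith [Real.mul_log_div_le ha hx, Real.mul_log_div_lt hb hy hyb]

lemma Real.pow_mul_pow_lt_of_log {a b x y : ℝ} {K J : ℕ} (ha : 0 < a) (hb : 0 < b) (hx : 0 < x)
    (hy : 0 < y) (h : K * Real.log (x / a) + J * Real.log (y / b) < 0) :
    x ^ K * y ^ J < a ^ K * b ^ J := by
  rw [← Real.log_lt_log_iff (by positivity) (by positivity), Real.log_mul (by positivity)
    (by positivity), Real.log_mul (by positivity) (by positivity), Real.log_pow, Real.log_pow,
    Real.log_pow, Real.log_pow]
  rw [Real.log_div hx.ne' ha.ne', Real.log_div hy.ne' hb.ne'] at h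
  linarith

lemma exists_nat_mul_add_nat_mul_neg {ι : Type*} (s : Finset ι) (L M : ι → ℝ) {a b : ℝ}
    (ha : 0 < a) (hb : 0 < b) (h : ∀ i ∈ s, a * L i + b * M i < 0) :
    ∃ K J : ℕ, 0 < K ∧ 0 < J ∧ ∀ i ∈ s, K * L i + J * M i < 0 := by
  have hK := tendsto_nat_ceil_mul_div_atTop ha.le
  have hJ := tendsto_nat_ceil_mul_div_atTop hb.le
  have hev : ∀ᶠ x : ℝ in atTop, 0 < x ∧
      ∀ i ∈ s, ⌈a * x⌉₊ / x * L i + ⌈b * x⌉₊ / x * M i < 0 :=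
    (eventually_gt_atTop 0).and <| (eventually_all_finset s).2 fun i hi =>
      ((hK.mul_const _).add (hJ.mul_const _)).eventually (gt_mem_nhds (h i hi))
  obtain ⟨x, hx, hneg⟩ := hev.exists
  refine ⟨⌈a * x⌉₊, ⌈b * x⌉₊, Nat.ceil_pos.2 (by positivity), Nat.ceil_pos.2 (by positivity),
    fun i hi => ?_⟩
  have e : (⌈a * x⌉₊ : ℝ) * L i + ⌈b * x⌉₊ * M i
      = x * (⌈a * x⌉₊ / x * L i + ⌈b * x⌉₊ / x * M i) := by field_simp
  rw [e]
  exact mul_neg_of_pos_of_neg hx (hneg i hi)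

lemma Real.exists_nat_cos_mul_neg {θ : ℝ} (h0 : 0 < θ) (hπ : θ < Real.pi) :
    ∃ n : ℕ, Real.cos (n * θ) < 0 := by
  set x := Real.pi / (2 * θ)
  have hlt : x < ⌊x⌋₊ + 1 := Nat.lt_floor_add_one x
  have hle : (⌊x⌋₊ : ℝ) ≤ x := Nat.floor_le (by positivity)
  have hx : x * θ = Real.pi / 2 := by simp only [x]; field_simp
  refine ⟨⌊x⌋₊ + 1, Real.cos_neg_of_pi_div_two_lt_of_lt ?_ ?_⟩ <;> push_cast <;>
    nlinarith [mul_le_mul_of_nonneg_right hle h0.le, mul_lt_mul_of_pos_right hlt h0]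

namespace Complex

lemma le_one_of_nonneg_of_norm_le_one {z : ℂ} (h0 : 0 ≤ z) (h1 : ‖z‖ ≤ 1) : z ≤ 1 :=
  le_def.2 ⟨by simpa [re_eq_norm.2 h0] using h1, by simpa using (nonneg_iff.1 h0).2.symm⟩

lemma norm_add_norm_one_sub_eq_one {z : ℂ} (h0 : 0 ≤ z) (h1 : z ≤ 1) : ‖z‖ + ‖1 - z‖ = 1 := by
  rw [← re_eq_norm.2 h0, ← re_eq_norm.2 (sub_nonneg.2 h1), sub_re, one_re]
  ring

lemma one_lt_norm_add_norm_one_sub {z : ℂ} (hz : ¬ 0 ≤ z) : 1 < ‖z‖ + ‖1 - z‖ := by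
  have h1 : z.re < ‖z‖ := (re_le_norm z).lt_of_ne fun h => hz (re_eq_norm.1 h)
  have h2 : (1 - z).re ≤ ‖1 - z‖ := re_le_norm _
  rw [sub_re, one_re] at h2
  linarith

lemma eq_or_eq_conj_of_norm_eq {w z : ℂ} (h1 : ‖w‖ = ‖z‖) (h2 : ‖1 - w‖ = ‖1 - z‖) :
    w = z ∨ w = conj z := by
  have e1 := congrArg (· ^ 2) h1
  have e2 := congrArg (· ^ 2) h2
  simp only [Complex.sq_norm, normSq_apply, sub_re, sub_im, one_re, one_im] at e1 e2
  have hre : w.re = z.re := by nlinarith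
  rcases mul_self_eq_mul_self_iff.1 (show w.im * w.im = z.im * z.im by nlinarith) with him | him
  · exact Or.inl (ext hre him)
  · exact Or.inr (ext (by simpa using hre) (by simpa using him))

lemma exists_re_pow_neg {z : ℂ} (hz : ¬ 0 ≤ z) : ∃ n : ℕ, (z ^ n).re < 0 := by
  rcases eq_or_ne z.im 0 with him | him
  · refine ⟨1, ?_⟩
    by_contra! hre
    exact hz (nonneg_iff.2 ⟨by simpa using hre, him.symm⟩)
  have harg : 0 < |arg z| := abs_pos.2 fun h => him (arg_eq_zero_iff.1 h).2
  have hπ : |arg z| < Real.pi := (abs_arg_le_pi z).lt_of_ne fun h => him <| by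
    rcases abs_eq Real.pi_pos.le |>.1 h with h | h
    · exact (arg_eq_pi_iff.1 h).2
    · linarith [neg_pi_lt_arg z]
  obtain ⟨n, hn⟩ := Real.exists_nat_cos_mul_neg harg hπ
  refine ⟨n, ?_⟩
  have hz0 : z ≠ 0 := fun h => him (by simp [h])
  rw [← norm_mul_exp_arg_mul_I z, mul_pow, ← exp_nat_mul, ← ofReal_pow,
    show (n : ℂ) * (arg z * I) = ((n * arg z : ℝ) : ℂ) * I by push_cast; ring,
    re_ofReal_mul, exp_ofReal_mul_I_re, ← Real.cos_abs, abs_mul, Nat.abs_cast]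
  exact mul_neg_of_pos_of_neg (pow_pos (norm_pos_iff.2 hz0) n) hn

lemma re_sum_pow_eq_card_mul {μ : ℕ → ℂ} {E : Finset ℕ} {z : ℂ}
    (hE : ∀ n ∈ E, μ n = z ∨ μ n = conj z) (δ : ℕ) :
    (∑ n ∈ E, μ n ^ δ).re = #E * (z ^ δ).re := by
  rw [re_sum, ← nsmul_eq_mul, ← sum_const]
  refine sum_congr rfl fun n hn => ?_
  rcases hE n hn with h | h <;> simp [h, ← map_pow]

end Complex

lemma norm_one_sub_le_two {R : Type*} [SeminormedRing R] [NormOneClass R] {x : R}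
    (hx : ‖x‖ ≤ 1) : ‖1 - x‖ ≤ 2 := by
  linarith [norm_sub_le (1 : R) x, norm_one (α := R)]

lemma finite_setOf_le_norm {E : Type*} [SeminormedAddCommGroup E] {μ : ℕ → E}
    (hμ : Tendsto μ atTop (𝓝 0)) {ε : ℝ} (hε : 0 < ε) : {n | ε ≤ ‖μ n‖}.Finite := by
  rw [← Nat.cofinite_eq_atTop] at hμ
  simpa using Filter.eventually_cofinite.1 (hμ.norm.eventually (gt_mem_nhds (by simpa using hε)))

lemma exists_norm_pow_mul_norm_one_sub_pow_lt {μ : ℕ → ℂ} (hμ : Tendsto μ atTop (𝓝 0))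
    (hb : ∀ n, ‖μ n‖ ≤ 1) {z : ℂ} (hz0 : z ≠ 0) (hz1 : z ≠ 1)
    (hmax : ∀ n, ‖μ n‖ + ‖1 - μ n‖ ≤ ‖z‖ + ‖1 - z‖) :
    ∃ K : ℕ, 0 < K ∧ ∃ J : ℕ, ∀ n, μ n ≠ z → μ n ≠ conj z →
      ‖μ n‖ ^ K * ‖1 - μ n‖ ^ J < ‖z‖ ^ K * ‖1 - z‖ ^ J := by
  set a := ‖z‖
  set b := ‖1 - z‖
  have ha : 0 < a := norm_pos_iff.2 hz0
  have hb' : 0 < b := norm_pos_iff.2 (sub_ne_zero.2 hz1.symm)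
  -- Every `μ n` with `‖μ n‖ < ε` is dominated by the single point `(ε, 2)`, which leaves finitely
  -- many constraints on `K : J`.
  set ε := a * Real.exp (-(b * Real.log (2 / b)) / a - 1)
  have hε : 0 < ε := by positivity
  have hεlog : a * Real.log (ε / a) + b * Real.log (2 / b) < 0 := by
    rw [mul_div_cancel_left₀ _ ha.ne', Real.log_exp]
    field_simp
    linarith
  have hF := finite_setOf_le_norm hμ hε
  set P : Finset (ℝ × ℝ) := insert (ε, 2) ((hF.toFinset.filter fun n =>
    μ n ≠ z ∧ μ n ≠ conj z ∧ μ n ≠ 0 ∧ μ n ≠ 1).image fun n => (‖μ n‖, ‖1 - μ n‖))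
  have hP : ∀ p ∈ P, a * Real.log (p.1 / a) + b * Real.log (p.2 / b) < 0 := by
    intro p hp
    rcases mem_insert.1 hp with rfl | hp
    · exact hεlog
    obtain ⟨n, hn, rfl⟩ := mem_image.1 hp
    obtain ⟨-, hnz, hnz', hn0, hn1⟩ := mem_filter.1 hn
    refine Real.mul_log_div_add_mul_log_div_neg ha hb' (norm_pos_iff.2 hn0)
      (norm_pos_iff.2 (sub_ne_zero.2 (Ne.symm hn1))) (hmax n) ?_
    by_contra! h
    rcases eq_or_eq_conj_of_norm_eq h.1 h.2 with h | h <;> contradiction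
  obtain ⟨K, J, hK, hJ, hKJ⟩ := exists_nat_mul_add_nat_mul_neg P _ _ ha hb' hP
  refine ⟨K, hK, J, fun n hnz hnz' => ?_⟩
  by_cases h01 : μ n = 0 ∨ μ n = 1
  · have : ‖μ n‖ ^ K * ‖1 - μ n‖ ^ J = 0 := by
      rcases h01 with h | h <;> simp [h, hK.ne', hJ.ne']
    rw [this]
    positivity
  rw [not_or] at h01
  by_cases hn : ε ≤ ‖μ n‖
  · refine Real.pow_mul_pow_lt_of_log ha hb' (norm_pos_iff.2 h01.1)
      (norm_pos_iff.2 (sub_ne_zero.2 (Ne.symm h01.2)))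
      (hKJ (‖μ n‖, ‖1 - μ n‖) (mem_insert_of_mem ?_))
    exact mem_image_of_mem _ (mem_filter.2 ⟨hF.mem_toFinset.2 hn, hnz, hnz', h01⟩)
  · calc ‖μ n‖ ^ K * ‖1 - μ n‖ ^ J ≤ ε ^ K * 2 ^ J := by
          gcongr
          · exact (not_le.1 hn).le
          · exact norm_one_sub_le_two (hb n)
      _ < a ^ K * b ^ J :=
          Real.pow_mul_pow_lt_of_log ha hb' hε two_pos (hKJ (ε, 2) (mem_insert_self _ _))

lemma exists_tendsto_pow_nhds_one {G : Type*} [Group G] [TopologicalSpace G]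
    [IsTopologicalGroup G] [CompactSpace G] [FirstCountableTopology G] (g : G) :
    ∃ m : ℕ → ℕ, Tendsto m atTop atTop ∧ Tendsto (fun i => g ^ m i) atTop (𝓝 1) := by
  obtain ⟨t, -, φ, hφ, hlim⟩ := isCompact_univ.tendsto_subseq (x := (g ^ ·)) fun _ => trivial
  have hgap (i : ℕ) : φ i + i ≤ φ (2 * i) := by
    simpa [two_mul, add_comm] using hφ.add_le_nat i i
  refine ⟨fun i => φ (2 * i) - φ i,
    tendsto_atTop_mono (fun i => show i ≤ _ by have := hgap i; omega) tendsto_id, ?_⟩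
  have h2 : Tendsto (fun i => g ^ φ (2 * i)) atTop (𝓝 t) :=
    hlim.comp (strictMono_mul_left_of_pos two_pos).tendsto_atTop
  have hsub (i : ℕ) : g ^ (φ (2 * i) - φ i) = g ^ φ (2 * i) * (g ^ φ i)⁻¹ :=
    pow_sub g (hφ.monotone (by omega))
  simpa [hsub] using h2.mul hlim.inv

lemma Complex.exists_tendsto_pow_nhds_one {u : ℂ} (hu : ‖u‖ = 1) :
    ∃ m : ℕ → ℕ, Tendsto m atTop atTop ∧ Tendsto (fun i => u ^ m i) atTop (𝓝 1) := by
  let g : Circle := ⟨u, mem_sphere_zero_iff_norm.2 hu⟩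
  obtain ⟨m, hm, hlim⟩ := _root_.exists_tendsto_pow_nhds_one g
  have hcoe : Continuous fun x : Circle => (x : ℂ) := continuous_subtype_val
  exact ⟨m, hm, by simpa [Function.comp_def] using (hcoe.tendsto 1).comp hlim⟩

lemma tendsto_tsum_mul_pow {c w : ℕ → ℂ} (hc : ∀ n, ‖c n‖ ≤ 1) (hw : Summable fun n => ‖w n‖)
    (hw1 : ∀ n, ‖w n‖ ≤ 1) {m : ℕ → ℕ} (hm : Tendsto m atTop atTop) {E : Finset ℕ}
    (hE : ∀ n ∈ E, Tendsto (fun i => w n ^ m i) atTop (𝓝 1)) (hEc : ∀ n ∉ E, ‖w n‖ < 1) :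
    Tendsto (fun i => ∑' n, c n * w n ^ m i) atTop (𝓝 (∑ n ∈ E, c n)) := by
  classical
  have hlim (n : ℕ) :
      Tendsto (fun i => c n * w n ^ m i) atTop (𝓝 (if n ∈ E then c n else 0)) := by
    split_ifs with hn
    · simpa using (hE n hn).const_mul (c n)
    · simpa using
        ((tendsto_pow_atTop_nhds_zero_of_norm_lt_one (hEc n hn)).comp hm).const_mul (c n)
  have hbound : ∀ᶠ i in atTop, ∀ n, ‖c n * w n ^ m i‖ ≤ ‖w n‖ := by
    filter_upwards [hm.eventually_ne_atTop 0] with i hi n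
    rw [norm_mul, norm_pow]
    calc ‖c n‖ * ‖w n‖ ^ m i ≤ 1 * ‖w n‖ := by
          gcongr
          exacts [hc n, pow_le_of_le_one (norm_nonneg _) (hw1 n) hi]
      _ = ‖w n‖ := one_mul _
  simpa [tsum_eq_sum (s := E) (fun n hn => if_neg hn), sum_ite_mem] using
    tendsto_tsum_of_dominated_convergence hw hlim hbound

lemma summable_norm_pow_mul_one_sub_pow {μ : ℕ → ℂ} (hs : Summable fun n => ‖μ n‖)
    (hb : ∀ n, ‖μ n‖ ≤ 1) {k : ℕ} (hk : 0 < k) (j : ℕ) :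
    Summable fun n => ‖μ n ^ k * (1 - μ n) ^ j‖ := by
  refine .of_nonneg_of_le (fun n => norm_nonneg _) (fun n => ?_) (hs.mul_right (2 ^ j))
  rw [norm_mul, norm_pow, norm_pow]
  gcongr
  · exact pow_le_of_le_one (norm_nonneg _) (hb n) hk.ne'
  · exact norm_one_sub_le_two (hb n)

lemma sum_choose_mul_tsum_pow_eq_tsum {μ : ℕ → ℂ} (hs : Summable fun n => ‖μ n‖)
    (hb : ∀ n, ‖μ n‖ ≤ 1) (j : ℕ) {k : ℕ} (hk : 0 < k) :
    ∑ i ∈ range (j + 1), (-1 : ℂ) ^ i * j.choose i * ∑' n, μ n ^ (k + i)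
      = ∑' n, μ n ^ k * (1 - μ n) ^ j := by
  have hsum (i : ℕ) : Summable fun n => (-1 : ℂ) ^ i * j.choose i * μ n ^ (k + i) :=
    .mul_left _ (by simpa using (summable_norm_pow_mul_one_sub_pow hs hb (k := k + i)
      (by omega) 0).of_norm)
  simp_rw [← tsum_mul_left]
  rw [← Summable.tsum_finsetSum fun i _ => hsum i]
  congr 1 with n
  rw [sub_eq_neg_add, add_pow, mul_sum]
  refine sum_congr rfl fun i _ => ?_
  rw [neg_pow, pow_add]
  ring

lemma tsum_pow_mul_one_sub_pow_nonneg {μ : ℕ → ℂ} (h0 : ∀ n, 0 ≤ μ n) (h1 : ∀ n, ‖μ n‖ ≤ 1)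
    (j k : ℕ) : 0 ≤ ∑' n, μ n ^ k * (1 - μ n) ^ j :=
  tsum_nonneg fun n => mul_nonneg (pow_nonneg (h0 n) k)
    (pow_nonneg (sub_nonneg.2 (Complex.le_one_of_nonneg_of_norm_le_one (h0 n) (h1 n))) j)

lemma re_sum_pow_nonneg_of_norm_lt {μ : ℕ → ℂ} (hs : Summable fun n => ‖μ n‖)
    (hb : ∀ n, ‖μ n‖ ≤ 1) (h : ∀ j k, 0 < k → 0 ≤ (∑' n, μ n ^ k * (1 - μ n) ^ j).re)
    {N K J : ℕ} (hK : 0 < K) (hN0 : μ N ≠ 0) (hN1 : μ N ≠ 1) {E : Finset ℕ}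
    (hE : ∀ n, n ∈ E ↔ μ n = μ N ∨ μ n = conj (μ N))
    (hdom : ∀ n ∉ E, ‖μ n‖ ^ K * ‖1 - μ n‖ ^ J < ‖μ N‖ ^ K * ‖1 - μ N‖ ^ J) (δ : ℕ) :
    0 ≤ (∑ n ∈ E, μ n ^ δ).re := by
  set r := ‖μ N‖ ^ K * ‖1 - μ N‖ ^ J
  have hr : 0 < r := by
    have := norm_pos_iff.2 (sub_ne_zero.2 hN1.symm)
    have := norm_pos_iff.2 hN0
    positivity
  set w : ℕ → ℂ := fun n => μ n ^ K * (1 - μ n) ^ J / r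
  have hw (n : ℕ) : ‖w n‖ = ‖μ n‖ ^ K * ‖1 - μ n‖ ^ J / r := by
    simp [w, norm_pow, abs_of_pos hr]
  have hwE (n : ℕ) (hn : n ∈ E) : w n = w N ∨ w n = conj (w N) := by
    rcases (hE n).1 hn with h | h <;> simp [w, h, map_div₀]
  have hwN : ‖w N‖ = 1 := by rw [hw, div_self hr.ne']
  obtain ⟨m, hm, hmu⟩ := Complex.exists_tendsto_pow_nhds_one hwN
  have hlim := tendsto_tsum_mul_pow (c := fun n => μ n ^ δ) (w := w) (E := E)
    (fun n => by simpa using pow_le_one₀ (norm_nonneg _) (hb n))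
    (by simpa [hw] using (summable_norm_pow_mul_one_sub_pow hs hb hK J).div_const r)
    (fun n => by
      by_cases hn : n ∈ E
      · rcases hwE n hn with h | h <;> simp [h, hwN]
      · rw [hw, div_le_one hr]
        exact (hdom n hn).le)
    hm
    (fun n hn => by
      rcases hwE n hn with h | h
      · simpa [h] using hmu
      · simpa [h, ← map_pow, Function.comp_def] using (continuous_conj.tendsto 1).comp hmu)
    (fun n hn => by rw [hw, div_lt_one hr]; exact hdom n hn)
  have hterm (i : ℕ) : ∑' n, μ n ^ δ * w n ^ m i
      = (∑' n, μ n ^ (m i * K + δ) * (1 - μ n) ^ (m i * J)) / ((r ^ m i : ℝ) : ℂ) := by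
    rw [← tsum_div_const]
    congr 1 with n
    simp only [w, div_pow, mul_pow, ← pow_mul, pow_add]
    push_cast
    ring
  refine ge_of_tendsto ((continuous_re.tendsto _).comp hlim) ?_
  filter_upwards [hm.eventually_ne_atTop 0] with i hi
  rw [Function.comp_apply, hterm, div_ofReal_re]
  exact div_nonneg (h _ _ (by positivity)) (by positivity)

theorem pos_of_re_tsum_pow_mul_one_sub_pow_nonneg {μ : ℕ → ℂ} (hs : Summable fun n => ‖μ n‖)
    (hb : ∀ n, ‖μ n‖ ≤ 1) (hne : ∀ n, μ n ≠ 0)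
    (h : ∀ j k, 0 < k → 0 ≤ (∑' n, μ n ^ k * (1 - μ n) ^ j).re) (n : ℕ) : 0 < μ n := by
  by_contra hn
  replace hn : ¬ 0 ≤ μ n := fun h0 => hn (h0.lt_of_ne' (hne n))
  have hμ : Tendsto μ atTop (𝓝 0) := hs.of_norm.tendsto_atTop_zero
  set v : ℕ → ℝ := fun n => ‖μ n‖ + ‖1 - μ n‖
  have hv : ∀ᶠ k in cocompact ℕ, v k ≤ v n := by
    have : Tendsto v atTop (𝓝 1) := by
      simpa using (hμ.norm.add (tendsto_const_nhds (x := (1 : ℂ)).sub hμ).norm)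
    rw [cocompact_eq_cofinite, Nat.cofinite_eq_atTop]
    exact (this.eventually (gt_mem_nhds (Complex.one_lt_norm_add_norm_one_sub hn))).mono
      fun _ => le_of_lt
  obtain ⟨N, hN⟩ := continuous_of_discreteTopology.exists_forall_ge' n hv
  have hz : ¬ 0 ≤ μ N := fun h0 => (Complex.one_lt_norm_add_norm_one_sub hn).not_ge <|
    (hN n).trans (Complex.norm_add_norm_one_sub_eq_one h0
      (Complex.le_one_of_nonneg_of_norm_le_one h0 (hb N))).le
  have hN1 : μ N ≠ 1 := fun h1 => hz (h1 ▸ zero_le_one)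
  obtain ⟨K, hK, J, hdom⟩ := exists_norm_pow_mul_norm_one_sub_pow_lt hμ hb (hne N) hN1 hN
  have hEfin : {n | μ n = μ N ∨ μ n = conj (μ N)}.Finite :=
    (finite_setOf_le_norm hμ (norm_pos_iff.2 (hne N))).subset
      (by rintro n (h | h) <;> simp [h])
  obtain ⟨δ, hδ⟩ := Complex.exists_re_pow_neg hz
  have hsum := re_sum_pow_nonneg_of_norm_lt hs hb h hK (hne N) hN1 (fun n => hEfin.mem_toFinset)
    (fun n hn => hdom n (fun h => hn (hEfin.mem_toFinset.2 (.inl h)))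
      (fun h => hn (hEfin.mem_toFinset.2 (.inr h)))) δ
  rw [Complex.re_sum_pow_eq_card_mul (fun n => hEfin.mem_toFinset.1) δ] at hsum
  have hcard : (0 : ℝ) < #hEfin.toFinset := by
    exact_mod_cast card_pos.2 ⟨N, hEfin.mem_toFinset.2 (.inl rfl)⟩
  exact hδ.not_ge (nonneg_of_mul_nonneg_right hsum hcard)

lemma norm_div_ofReal_le_one {x : ℂ} {c : ℝ} (hc : 0 < c) (hx : ‖x‖ ≤ c) : ‖x / c‖ ≤ 1 := by
  rw [norm_div, norm_real, Real.norm_of_nonneg hc.le]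
  exact div_le_one_of_le₀ hx hc.le

lemma sum_choose_mul_div_pow_eq_tsum {lam p : ℕ → ℂ} (hsum : Summable fun n => ‖lam n‖)
    (hp : ∀ k, 1 ≤ k → p k = ∑' n, lam n ^ k) {c : ℝ} (hc : 0 < c) (hcb : ∀ n, ‖lam n‖ ≤ c)
    (j k : ℕ) :
    ∑ i ∈ range (j + 1), (-1 : ℂ) ^ i * j.choose i * p (k + 1 + i) / (c : ℂ) ^ (k + 1 + i)
      = ∑' n, (lam n / c) ^ (k + 1) * (1 - lam n / c) ^ j := by
  rw [← sum_choose_mul_tsum_pow_eq_tsum (by simpa [norm_div] using hsum.div_const ‖(c : ℂ)‖)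
    (fun n => norm_div_ofReal_le_one hc (hcb n)) j k.succ_pos]
  refine sum_congr rfl fun i _ => ?_
  rw [hp _ (by omega), mul_div_assoc, ← tsum_div_const]
  simp_rw [div_pow]

/-- positivity criterion for an absolutely summable complex sequence
in terms of Hausdorff-type moment inequalities on its power sums. -/
theorem positivity_criterion_power_sums
    (lam : ℕ → ℂ) (hsum : Summable fun n => ‖lam n‖)
    (hne : ∀ n, lam n ≠ 0)
    (p : ℕ → ℂ) (hp : ∀ k, 1 ≤ k → p k = ∑' n, lam n ^ k) :
    (∀ n, (lam n).im = 0 ∧ 0 < (lam n).re) ↔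
      ∃ c : ℝ, (∀ n, ‖lam n‖ ≤ c) ∧
        ∀ j k : ℕ,
          (∑ i ∈ Finset.range (j + 1),
              (-1 : ℂ) ^ i * (j.choose i) * p (k + 1 + i) / (c : ℂ) ^ (k + 1 + i)).im = 0 ∧
          0 ≤ (∑ i ∈ Finset.range (j + 1),
              (-1 : ℂ) ^ i * (j.choose i) * p (k + 1 + i) / (c : ℂ) ^ (k + 1 + i)).re := by
  have hc0 {c : ℝ} (hcb : ∀ n, ‖lam n‖ ≤ c) : 0 < c := (norm_pos_iff.2 (hne 0)).trans_le (hcb 0)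
  have hpos_iff (z : ℂ) : z.im = 0 ∧ 0 < z.re ↔ 0 < z := by rw [pos_iff, eq_comm, and_comm]
  have hnonneg_iff (z : ℂ) : z.im = 0 ∧ 0 ≤ z.re ↔ 0 ≤ z := by rw [nonneg_iff, eq_comm, and_comm]
  simp only [hpos_iff, hnonneg_iff]
  constructor
  · intro hpos
    have hcb (n : ℕ) : ‖lam n‖ ≤ ∑' n, ‖lam n‖ := hsum.le_tsum n fun _ _ => norm_nonneg _
    refine ⟨_, hcb, fun j k => ?_⟩
    rw [sum_choose_mul_div_pow_eq_tsum hsum hp (hc0 hcb) hcb]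
    exact tsum_pow_mul_one_sub_pow_nonneg
      (fun n => div_nonneg (hpos n).le (zero_le_real.2 (hc0 hcb).le))
      (fun n => norm_div_ofReal_le_one (hc0 hcb) (hcb n)) j (k + 1)
  · rintro ⟨c, hcb, hmom⟩ n
    have hc : (0 : ℂ) < c := zero_lt_real.2 (hc0 hcb)
    have hμ := pos_of_re_tsum_pow_mul_one_sub_pow_nonneg
      (by simpa [norm_div] using hsum.div_const ‖(c : ℂ)‖)
      (fun n => norm_div_ofReal_le_one (hc0 hcb) (hcb n)) (fun n => div_ne_zero (hne n) hc.ne')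
      (fun j k hk => by
        obtain ⟨k, rfl⟩ := Nat.exists_eq_add_one_of_ne_zero hk.ne'
        rw [← sum_choose_mul_div_pow_eq_tsum hsum hp (hc0 hcb) hcb]
        exact (nonneg_iff.1 (hmom j k)).1) n
    simpa [mul_div_cancel₀ _ hc.ne'] using mul_pos hc hμ
end

section
/- Let λ : ℕ → ℂ with ∑_n ‖λ_n‖ < ∞. If every elementary symmetric sum e_k (k ≥ 0) is a rational number (i.e. lies in the image of ℚ in ℂ), then every power sum p_k (k ≥ 1) is a rational number. -/
/-!
Newton's identities express `p k` through `e 1, …, e k` and `p 1, …, p (k - 1)` with integer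
coefficients. They hold for every truncation `λ 0, …, λ (N - 1)`, and as `N → ∞` the truncated
elementary and power sums converge to `e k` and `p k` by absolute summability, so the identities
survive in the limit. Strong induction on `k` then shows that each `p k` lies in the image of `ℚ`.
-/

open Complex Finset

open Filter Topology

section Newton

variable {R : Type*} [CommRing R]

def NewtonIdentities (e p : ℕ → R) : Prop :=
  ∀ k, 0 < k → p k = (-1) ^ (k + 1) * k * e k -
    ∑ a ∈ antidiagonal k with a.1 ∈ Set.Ioo 0 k, (-1) ^ a.1 * e a.1 * p a.2

theorem newtonIdentities_finset {ι : Type*} (s : Finset ι) (x : ι → R) :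
    NewtonIdentities (fun k => ∑ t ∈ s.powersetCard k, ∏ i ∈ t, x i)
      (fun k => ∑ i ∈ s, x i ^ k) := by
  intro k hk
  have hval : (univ : Finset s).val.map (fun i : s => x i) = s.val.map x := by
    rw [univ_eq_attach, attach_val]
    exact Multiset.attach_map_val' s.val x
  have hesymm (j : ℕ) : MvPolynomial.aeval (fun i : s => x i) (MvPolynomial.esymm s R j) =
      ∑ t ∈ s.powersetCard j, ∏ i ∈ t, x i := by
    rw [MvPolynomial.aeval_esymm_eq_multiset_esymm, hval, esymm_map_val]
  have hpsum (j : ℕ) : MvPolynomial.aeval (fun i : s => x i) (MvPolynomial.psum s R j) =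
      ∑ i ∈ s, x i ^ j := by
    simp [MvPolynomial.psum, univ_eq_attach, sum_attach s (fun i => x i ^ j)]
  have h := congrArg (MvPolynomial.aeval fun i : s => x i)
    (MvPolynomial.psum_eq_mul_esymm_sub_sum s R k hk)
  simpa only [map_sub, map_mul, map_pow, map_neg, map_one, map_natCast, map_sum, hesymm, hpsum]
    using h

theorem NewtonIdentities.of_tendsto [TopologicalSpace R] [IsTopologicalRing R] [T2Space R]
    {α : Type*} {l : Filter α} [l.NeBot] {eN pN : α → ℕ → R} {e p : ℕ → R}
    (hN : ∀ n, NewtonIdentities (eN n) (pN n))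
    (he : ∀ j, Tendsto (eN · j) l (𝓝 (e j))) (hp : ∀ j, 0 < j → Tendsto (pN · j) l (𝓝 (p j))) :
    NewtonIdentities e p := by
  intro k hk
  refine tendsto_nhds_unique (hp k hk) ?_
  simp_rw [hN _ k hk]
  refine ((he k).const_mul _).sub (tendsto_finsetSum _ fun a ha => ?_)
  simp only [mem_filter, HasAntidiagonal.mem_antidiagonal, Set.mem_Ioo] at ha
  exact ((he a.1).const_mul _).mul (hp a.2 (by omega))

theorem NewtonIdentities.mem_of_forall_mem {e p : ℕ → R} (h : NewtonIdentities e p)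
    {S : Subring R} (he : ∀ k, e k ∈ S) : ∀ k, 0 < k → p k ∈ S := by
  intro k
  induction k using Nat.strong_induction_on with
  | _ k ih =>
    intro hk
    rw [h k hk]
    refine sub_mem (mul_mem (mul_mem (pow_mem (neg_mem (one_mem _)) _) (natCast_mem _ k)) (he k))
      (sum_mem fun a ha => ?_)
    simp only [mem_filter, HasAntidiagonal.mem_antidiagonal, Set.mem_Ioo] at ha
    exact mul_mem (mul_mem (pow_mem (neg_mem (one_mem _)) _) (he a.1)) (ih a.2 (by omega) (by omega))

end Newton

theorem tendsto_powerset_range_atTop : Tendsto (fun N => (range N).powerset) atTop atTop :=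
  tendsto_atTop_finset_of_monotone (fun _ _ h => powerset_mono.mpr (range_subset_range.mpr h))
    fun S => ⟨S.sup id + 1, mem_powerset.mpr fun _ hi => mem_range.mpr
      (Nat.lt_succ_of_le (le_sup (f := id) hi))⟩

theorem HasSum.tendsto_sum_powersetCard_range {M : Type*} [AddCommMonoid M] [TopologicalSpace M]
    {k : ℕ} {f : Finset ℕ → M} {a : M}
    (hf : HasSum (fun S : {S : Finset ℕ // S.card = k} => f S) a) :
    Tendsto (fun N => ∑ t ∈ (range N).powersetCard k, f t) atTop (𝓝 a) := by
  have hind := (hasSum_subtype_iff_indicator (s := {S : Finset ℕ | S.card = k})).mp hf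
  refine (hind.comp tendsto_powerset_range_atTop).congr fun N => ?_
  rw [Function.comp_apply, powersetCard_eq_filter, sum_filter]
  simp only [Set.indicator_apply, Set.mem_ofPred_eq]

theorem summable_pow_of_summable_norm {ι R : Type*} [NormedRing R] [CompleteSpace R] {f : ι → R}
    (hf : Summable (‖f ·‖)) {k : ℕ} (hk : 0 < k) : Summable (f · ^ k) := by
  refine .of_norm_bounded_eventually hf ?_
  filter_upwards [hf.tendsto_cofinite_zero.eventually (gt_mem_nhds one_pos)] with i hi
  exact (norm_pow_le' _ hk).trans (pow_le_of_le_one (norm_nonneg _) hi.le hk.ne')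

/-- if all elementary symmetric sums of an absolutely summable complex
sequence are rational, then so are all its power sums. -/
theorem power_sums_rational_of_elementary_rational
    (lam : ℕ → ℂ) (hsum : Summable fun n => ‖lam n‖)
    (p : ℕ → ℂ) (hp : ∀ k, 1 ≤ k → p k = ∑' n, lam n ^ k)
    (e : ℕ → ℂ) (he : ∀ k, e k = ∑' S : {S : Finset ℕ // S.card = k}, ∏ i ∈ S.1, lam i)
    (hrat : ∀ k : ℕ, ∃ q : ℚ, e k = (q : ℂ)) :
    ∀ k : ℕ, 1 ≤ k → ∃ q : ℚ, p k = (q : ℂ) := by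
  have hE (j : ℕ) :
      Tendsto (fun N => ∑ t ∈ (range N).powersetCard j, ∏ i ∈ t, lam i) atTop (𝓝 (e j)) := by
    have hsummable : Summable fun S : {S : Finset ℕ // S.card = j} => ∏ i ∈ S.1, lam i :=
      (summable_finsetProd_of_summable_norm hsum).subtype _
    rw [he j]
    exact hsummable.hasSum.tendsto_sum_powersetCard_range
  have hP (j : ℕ) (hj : 0 < j) :
      Tendsto (fun N => ∑ i ∈ range N, lam i ^ j) atTop (𝓝 (p j)) := by
    rw [hp j hj]
    exact (summable_pow_of_summable_norm hsum hj).hasSum.tendsto_sum_nat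
  have hNewton : NewtonIdentities e p :=
    .of_tendsto (fun N => newtonIdentities_finset (range N) lam) hE hP
  intro k hk
  obtain ⟨q, hq⟩ := hNewton.mem_of_forall_mem (S := (Rat.castHom ℂ).range)
    (fun j => (hrat j).imp fun _ h => h.symm) k hk
  exact ⟨q, hq.symm⟩
end

section
/- Let λ : ℕ → ℂ with ∑_n ‖λ_n‖ < ∞ and let f : ℂ → ℂ be the entire function f(z) = ∏_n (1 − λ_n z) (the product converges absolutely for every z). Then for every integer k ≥ 0, the k-th derivative of f at 0 equals (−1)^k k! e_k; equivalently, e_k = (−1)^k/k! · f^{(k)}(0). -/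
/-!
Expanding `∏ (1 + aᵢ)` as the sum of `∏_{i ∈ S} aᵢ` over all finite sets `S` and grouping the
sets by cardinality shows `∏ (1 - λₙ z) = ∑ₖ (-1)ᵏ eₖ zᵏ` for every `z`. Uniqueness of power series
coefficients then identifies `f⁽ᵏ⁾(0) / k!` with `(-1)ᵏ eₖ`.
-/

open Complex Finset Nat

open Filter Topology

section Esymm

variable {ι R : Type*}

noncomputable def tsumEsymm [CommSemiring R] [TopologicalSpace R] (a : ι → R) (k : ℕ) : R :=
  ∑' S : {S : Finset ι // S.card = k}, ∏ i ∈ S.1, a i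

theorem tsumEsymm_mul_const [Semifield R] [TopologicalSpace R] [IsTopologicalSemiring R]
    [T2Space R] (a : ι → R) (c : R) (k : ℕ) :
    tsumEsymm (fun i ↦ a i * c) k = c ^ k * tsumEsymm a k := by
  simp only [tsumEsymm, prod_mul_distrib, prod_const]
  rw [← tsum_mul_left]
  exact tsum_congr fun S ↦ by rw [S.2, mul_comm]

theorem hasSum_tsumEsymm [NormedCommRing R] [NormOneClass R] [CompleteSpace R] {a : ι → R}
    (ha : Summable (‖a ·‖)) : HasSum (tsumEsymm a) (∏' i, (1 + a i)) := by
  rw [tprod_one_add (summable_finsetProd_of_summable_norm ha)]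
  exact (summable_finsetProd_of_summable_norm ha).hasSum.tsum_fiberwise Finset.card

theorem hasSum_tprod_one_sub_mul {𝕜 : Type*} [NormedField 𝕜] [CompleteSpace 𝕜] {a : ι → 𝕜}
    (ha : Summable (‖a ·‖)) (z : 𝕜) :
    HasSum (fun k ↦ z ^ k * ((-1) ^ k * tsumEsymm a k)) (∏' i, (1 - a i * z)) := by
  have h := hasSum_tsumEsymm (a := fun i ↦ a i * -z) (by simpa [norm_mul] using ha.mul_right ‖z‖)
  rw [funext (tsumEsymm_mul_const a (-z))] at h
  simp only [mul_neg, ← sub_eq_add_neg] at h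
  convert h using 2 with k
  ring

end Esymm

theorem iteratedDeriv_eq_factorial_mul_of_hasSum {𝕜 : Type*} [NontriviallyNormedField 𝕜]
    [CompleteSpace 𝕜] [CharZero 𝕜] {f : 𝕜 → 𝕜} {c : ℕ → 𝕜}
    (hf : ∀ᶠ z in 𝓝 0, HasSum (fun n ↦ z ^ n * c n) (f z)) (n : ℕ) :
    iteratedDeriv n f 0 = n ! * c n := by
  have hp : HasFPowerSeriesAt f (FormalMultilinearSeries.ofScalars 𝕜 c) 0 := by
    rw [hasFPowerSeriesAt_iff]
    simpa [FormalMultilinearSeries.coeff_ofScalars] using hf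
  have hc := congrArg (·.coeff n) (hp.eq_formalMultilinearSeries hp.analyticAt.hasFPowerSeriesAt)
  simp only [FormalMultilinearSeries.coeff_ofScalars] at hc
  rw [hc, mul_div_cancel₀ _ (Nat.cast_ne_zero.2 n.factorial_ne_zero)]

/-- the Taylor coefficients at 0 of the genus-0 product
`f(z) = ∏ (1 - λₙ z)` are the signed elementary symmetric sums:
`f⁽ᵏ⁾(0) = (-1)^k k! e_k`. -/
theorem iteratedDeriv_product_eq_elementary
    (lam : ℕ → ℂ) (hsum : Summable fun n => ‖lam n‖)
    (f : ℂ → ℂ) (hf : ∀ z, f z = ∏' n, (1 - lam n * z))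
    (e : ℕ → ℂ) (he : ∀ k, e k = ∑' S : {S : Finset ℕ // S.card = k}, ∏ i ∈ S.1, lam i) :
    ∀ k : ℕ, iteratedDeriv k f 0 = (-1 : ℂ) ^ k * (k ! : ℕ) * e k := by
  intro k
  have hexp : ∀ᶠ z in 𝓝 0, HasSum (fun n ↦ z ^ n * ((-1) ^ n * e n)) (f z) :=
    .of_forall fun z ↦ by rw [funext he, hf z]; exact hasSum_tprod_one_sub_mul hsum z
  rw [iteratedDeriv_eq_factorial_mul_of_hasSum hexp]
  ring
end

section
/- Let λ : ℕ → ℂ with ∑_n ‖λ_n‖ < ∞ and let f : ℂ → ℂ be the entire function f(z) = ∏_n (1 − λ_n z) (the product converges absolutely for every z; f(0) = 1 and f is nonvanishing in a neighborhood of 0). Then for every integer k ≥ 1, the k-th derivative at 0 of the function z ↦ log f(z) (principal branch of the complex logarithm) equals −(k−1)! · p_k; equivalently, p_k = −1/(k−1)! · (d^k/dz^k) log f(z) |_{z=0}. -/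
/-!
Near `0` each factor has the expansion `log (1 - λₙ z) = -∑ₖ λₙᵏ zᵏ / k`. Since `∑ ‖λₙ‖ < ∞`,
the double series `∑ₙ ∑ₖ λₙᵏ zᵏ / k` converges absolutely for small `z`, so summing over `n`
first gives `∑ₙ log (1 - λₙ z) = -∑ₖ pₖ zᵏ / k`. This sum is small, so it is the principal
logarithm of its exponential `f z`; hence `log ∘ f` has the power series `-∑ₖ pₖ zᵏ / k` at `0`,
whose `k`-th Taylor coefficient is `-pₖ / k = -(k - 1)! pₖ / k!`.
-/

open Complex Finset Nat

open Filter Topology FormalMultilinearSeries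

section PowerSeries

variable {𝕜 : Type*} [NontriviallyNormedField 𝕜] {c : ℕ → 𝕜} {g : 𝕜 → 𝕜}

theorem hasFPowerSeriesAt_ofScalars_of_eventually_hasSum
    (h : ∀ᶠ z in 𝓝 0, HasSum (fun k => c k * z ^ k) (g z)) :
    HasFPowerSeriesAt g (ofScalars 𝕜 c) 0 := by
  obtain ⟨ε, hε, hball⟩ := Metric.eventually_nhds_iff_ball.mp h
  obtain ⟨x, hx0, hxε⟩ := NormedField.exists_norm_lt 𝕜 hε
  have hx : x ∈ Metric.ball 0 ε := by simpa using hxε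
  have hterms : Tendsto (fun k => ‖ofScalars 𝕜 c k‖ * (‖x‖₊ : ℝ) ^ k) atTop (𝓝 0) := by
    simpa [ofScalars_norm, norm_mul, norm_pow] using
      (hball x hx).summable.tendsto_atTop_zero.norm
  refine ⟨‖x‖₊, (ofScalars 𝕜 c).le_radius_of_tendsto hterms, by simpa using hx0, ?_⟩
  intro y hy
  have hyε : y ∈ Metric.ball 0 ε := by
    simp only [Metric.eball_coe, Metric.mem_ball, coe_nnnorm] at hy ⊢
    exact hy.trans hxε
  simpa [ofScalars_apply_eq, mul_comm] using hball y hyε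

theorem HasFPowerSeriesAt.iteratedDeriv_eq_factorial_mul [CompleteSpace 𝕜] {x : 𝕜}
    (h : HasFPowerSeriesAt g (ofScalars 𝕜 c) x) (k : ℕ) :
    iteratedDeriv k g x = k ! * c k := by
  obtain ⟨r, hr⟩ := h
  simp [iteratedDeriv_eq_iteratedFDeriv, ← hr.factorial_smul 1 k]

end PowerSeries

namespace Complex

variable {w : ℕ → ℂ}

theorem summable_uncurry_pow_div (hw : Summable (‖w ·‖)) (hw1 : ∑' n, ‖w n‖ < 1) :
    Summable (Function.uncurry fun n k : ℕ => w n ^ k / k) := by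
  set s := ∑' n, ‖w n‖
  have hgeom : Summable fun k : ℕ => s ^ (k - 1) :=
    (summable_nat_add_iff 1).mp <| by
      simpa using summable_geometric_of_lt_one (tsum_nonneg fun _ => norm_nonneg _) hw1
  refine Summable.of_norm_bounded (hw.mul_of_nonneg hgeom (fun _ => norm_nonneg _)
    fun _ => by positivity) ?_
  rintro ⟨n, k⟩
  rcases eq_or_ne k 0 with rfl | hk
  · simp
  calc ‖w n ^ k / k‖ ≤ ‖w n‖ ^ k := by
        rw [norm_div, norm_pow, norm_natCast]
        exact div_le_self (by positivity) (by exact_mod_cast Nat.one_le_iff_ne_zero.mpr hk)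
    _ = ‖w n‖ * ‖w n‖ ^ (k - 1) := (mul_pow_sub_one hk _).symm
    _ ≤ ‖w n‖ * s ^ (k - 1) := by
        gcongr; exact hw.le_tsum n fun _ _ => norm_nonneg _

theorem hasSum_tsum_pow_div (hw : Summable (‖w ·‖)) (hw1 : ∑' n, ‖w n‖ < 1) :
    HasSum (fun k : ℕ => (∑' n, w n ^ k) / k) (-∑' n, log (1 - w n)) := by
  have hF := summable_uncurry_pow_div hw hw1
  have hrow (n : ℕ) : ∑' k : ℕ, w n ^ k / k = -log (1 - w n) :=
    (hasSum_taylorSeries_neg_log <| (hw.le_tsum n fun _ _ => norm_nonneg _).trans_lt hw1).tsum_eq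
  have hcols : HasSum (fun k : ℕ => ∑' n, w n ^ k / k) (∑' n, ∑' k : ℕ, w n ^ k / k) := by
    rw [← hF.tsum_comm]
    exact hF.prod_symm.prod.hasSum
  simpa only [tsum_div_const, hrow, tsum_neg] using hcols

theorem log_tprod_one_sub (hw : Summable (‖w ·‖)) (hw2 : ∑' n, ‖w n‖ ≤ 1 / 2) :
    log (∏' n, (1 - w n)) = ∑' n, log (1 - w n) := by
  have hsmall (n : ℕ) : ‖-w n‖ ≤ 1 / 2 :=
    (norm_neg (w n)).trans_le <| (hw.le_tsum n fun _ _ => norm_nonneg _).trans hw2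
  have hlog (n : ℕ) : ‖log (1 - w n)‖ ≤ 3 / 2 * ‖w n‖ := by
    simpa [sub_eq_add_neg] using norm_log_one_add_half_le_self (hsmall n)
  have hsum : Summable fun n => log (1 - w n) := by
    simpa [sub_eq_add_neg] using summable_log_one_add_of_summable (hw.of_norm.neg)
  have hne (n : ℕ) : 1 - w n ≠ 0 := by
    intro h
    have := hsmall n
    rw [← sub_eq_zero.mp h] at this
    norm_num at this
  have him : |(∑' n, log (1 - w n)).im| < Real.pi :=
    calc |(∑' n, log (1 - w n)).im| ≤ ∑' n, 3 / 2 * ‖w n‖ :=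
          (abs_im_le_norm _).trans (tsum_of_norm_bounded (hw.mul_left _).hasSum hlog)
      _ < Real.pi := by rw [tsum_mul_left]; linarith [Real.pi_gt_three]
  rw [← cexp_tsum_eq_tprod hne hsum, log_exp (abs_lt.mp him).1 (abs_lt.mp him).2.le]

theorem eventually_hasSum_log_tprod_one_sub_mul {a : ℕ → ℂ} (ha : Summable (‖a ·‖)) :
    ∀ᶠ z in 𝓝 0,
      HasSum (fun k : ℕ => -(∑' n, a n ^ k) / k * z ^ k) (log (∏' n, (1 - a n * z))) := by
  have hsmall : ∀ᶠ z : ℂ in 𝓝 0, (∑' n, ‖a n‖) * ‖z‖ < 1 / 2 := by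
    have : Tendsto (fun z : ℂ => (∑' n, ‖a n‖) * ‖z‖) (𝓝 0) (𝓝 0) :=
      Continuous.tendsto' (by fun_prop) 0 0 (by simp)
    exact this.eventually (gt_mem_nhds one_half_pos)
  filter_upwards [hsmall] with z hz
  have hw : Summable fun n => ‖a n * z‖ := by simpa only [norm_mul] using ha.mul_right ‖z‖
  have hw2 : ∑' n, ‖a n * z‖ ≤ 1 / 2 := by
    simp only [norm_mul, tsum_mul_right]
    exact hz.le
  have hlog := (hasSum_tsum_pow_div hw (by linarith)).neg
  rw [neg_neg, ← log_tprod_one_sub hw hw2] at hlog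
  refine hlog.congr_fun fun k => ?_
  simp only [mul_pow, tsum_mul_right]
  ring

end Complex

/-- the Taylor coefficients at 0 of `log f(z)`, where
`f(z) = ∏ (1 - λₙ z)`, are the (negated, scaled) power sums:
`(d^k/dz^k) log f(z) |_{z=0} = -(k-1)! p_k` for `k ≥ 1`. -/
theorem iteratedDeriv_log_product_eq_power_sum
    (lam : ℕ → ℂ) (hsum : Summable fun n => ‖lam n‖)
    (f : ℂ → ℂ) (hf : ∀ z, f z = ∏' n, (1 - lam n * z))
    (p : ℕ → ℂ) (hp : ∀ k, 1 ≤ k → p k = ∑' n, lam n ^ k) :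
    ∀ k : ℕ, 1 ≤ k →
      iteratedDeriv k (fun z => Complex.log (f z)) 0 = -(((k - 1)! : ℕ) : ℂ) * p k := by
  intro k hk
  obtain ⟨j, rfl⟩ := Nat.exists_eq_add_of_le' hk
  have hseries := hasFPowerSeriesAt_ofScalars_of_eventually_hasSum
    (eventually_hasSum_log_tprod_one_sub_mul hsum)
  simp only [hf, hseries.iteratedDeriv_eq_factorial_mul, hp _ hk]
  push_cast [factorial_succ]
  field_simp
end
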